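/- arXiv:2112.07137 — 6 statements merged into one kernel-verified Lean document; each statement's English description precedes it below -/
import Mathlib

section
/- Let n be a positive integer and let g₁, g₂, v ∈ F₂[x] be polynomials of degree less than n such that g₁ divides xⁿ−1, g₂ divides xⁿ−1, gcd(g₁, g₂) = 1 and gcd(v−1, xⁿ−1) = 1. Then the two-generator quasi-cyclic code C(g₁,g₂,v) ⊆ F₂^{2n} has F₂-dimension 2n − deg(g₁) − deg(g₂). -/
open Polynomial

/-- The coefficient-vector map `[g] = (g₀, …, g_{n−1}) ∈ F₂ⁿ` (as a linear map). -/
noncomputable def vecL (n : ℕ) : Polynomial (ZMod 2) →ₗ[ZMod 2] (Fin n → ZMod 2) :=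
  LinearMap.pi fun i => Polynomial.lcoeff (ZMod 2) (i : ℕ)

/-- The linear map `(a, b) ↦ ([a·v·g₁ + b·g₂ mod xⁿ−1], [a·g₁ + b·v·g₂ mod xⁿ−1])`. -/
noncomputable def cwL (n : ℕ) (g₁ g₂ v : Polynomial (ZMod 2)) :
    (Polynomial (ZMod 2) × Polynomial (ZMod 2)) →ₗ[ZMod 2]
      ((Fin n → ZMod 2) × (Fin n → ZMod 2)) :=
  LinearMap.prod
    ((vecL n).comp ((Polynomial.modByMonicHom (X ^ n - 1)).comp
      ((LinearMap.mulRight (ZMod 2) (v * g₁)).comp (LinearMap.fst (ZMod 2) _ _) +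
       (LinearMap.mulRight (ZMod 2) g₂).comp (LinearMap.snd (ZMod 2) _ _))))
    ((vecL n).comp ((Polynomial.modByMonicHom (X ^ n - 1)).comp
      ((LinearMap.mulRight (ZMod 2) g₁).comp (LinearMap.fst (ZMod 2) _ _) +
       (LinearMap.mulRight (ZMod 2) (v * g₂)).comp (LinearMap.snd (ZMod 2) _ _))))

/-- The two-generator quasi-cyclic code
`C(g₁,g₂,v) = { ([a·v·g₁ + b·g₂ mod xⁿ−1], [a·g₁ + b·v·g₂ mod xⁿ−1]) : a, b ∈ F₂[x] } ⊆ F₂^{2n}`,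
where `F₂^{2n}` is identified with `F₂ⁿ × F₂ⁿ`. -/
noncomputable def QCCode (n : ℕ) (g₁ g₂ v : Polynomial (ZMod 2)) :
    Submodule (ZMod 2) ((Fin n → ZMod 2) × (Fin n → ZMod 2)) :=
  LinearMap.range (cwL n g₁ g₂ v)

/-- Euclidean inner product on `F₂ⁿ`. -/
def einner (n : ℕ) (u w : Fin n → ZMod 2) : ZMod 2 := ∑ i, u i * w i

/-- Symplectic inner product `⟨u,w⟩ₛ = Σᵢ (uᵢ w_{n+i} − u_{n+i} wᵢ)` on `F₂ⁿ × F₂ⁿ ≅ F₂^{2n}`. -/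
def sinner (n : ℕ) (u w : (Fin n → ZMod 2) × (Fin n → ZMod 2)) : ZMod 2 :=
  ∑ i, (u.1 i * w.2 i - u.2 i * w.1 i)

/-- Symplectic dual `C^⊥ₛ = {w : ⟨u,w⟩ₛ = 0 for all u ∈ C}` of a linear code `C ⊆ F₂^{2n}`. -/
noncomputable def sympDual (n : ℕ)
    (C : Submodule (ZMod 2) ((Fin n → ZMod 2) × (Fin n → ZMod 2))) :
    Submodule (ZMod 2) ((Fin n → ZMod 2) × (Fin n → ZMod 2)) where
  carrier := {w | ∀ u ∈ C, sinner n u w = 0}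
  zero_mem' := by intro u _; simp [sinner]
  add_mem' := by
    intro w w' hw hw' u hu
    have h : sinner n u (w + w') = sinner n u w + sinner n u w' := by
      simp only [sinner, Prod.fst_add, Prod.snd_add, Pi.add_apply]
      rw [← Finset.sum_add_distrib]
      exact Finset.sum_congr rfl fun i _ => by ring
    rw [h, hw u hu, hw' u hu, add_zero]
  smul_mem' := by
    intro c w hw u hu
    have h : sinner n u (c • w) = c * sinner n u w := by
      simp only [sinner, Prod.smul_fst, Prod.smul_snd, Pi.smul_apply, smul_eq_mul,
        Finset.mul_sum]
      exact Finset.sum_congr rfl fun i _ => by ring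
    rw [h, hw u hu, mul_zero]

/-- Symplectic weight `wₛ(u) = #{i : (uᵢ, u_{n+i}) ≠ (0,0)}` on `F₂ⁿ × F₂ⁿ ≅ F₂^{2n}`. -/
def sympWt (n : ℕ) (u : (Fin n → ZMod 2) × (Fin n → ZMod 2)) : ℕ :=
  (Finset.univ.filter fun i : Fin n => (u.1 i, u.2 i) ≠ ((0 : ZMod 2), (0 : ZMod 2))).card

/-- For `f` of degree `< n`, the polynomial `f̄ = f₀ + f_{n−1}x + f_{n−2}x² + ⋯ + f₁x^{n−1}`. -/
noncomputable def barPoly (n : ℕ) (f : Polynomial (ZMod 2)) : Polynomial (ZMod 2) :=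
  ∑ i ∈ Finset.range n, Polynomial.C (f.coeff (if i = 0 then 0 else n - i)) * Polynomial.X ^ i

/-- The linear map `(c, d) ↦ ([c·G₁ + d·V·G₂ mod xⁿ−1], [c·V·G₁ + d·G₂ mod xⁿ−1])`;
with `G₁ = g₁^⊥`, `G₂ = g₂^⊥` and `V = v̄` its range is the claimed symplectic dual code. -/
noncomputable def dualCwL (n : ℕ) (G₁ G₂ V : Polynomial (ZMod 2)) :
    (Polynomial (ZMod 2) × Polynomial (ZMod 2)) →ₗ[ZMod 2]
      ((Fin n → ZMod 2) × (Fin n → ZMod 2)) :=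
  LinearMap.prod
    ((vecL n).comp ((Polynomial.modByMonicHom (X ^ n - 1)).comp
      ((LinearMap.mulRight (ZMod 2) G₁).comp (LinearMap.fst (ZMod 2) _ _) +
       (LinearMap.mulRight (ZMod 2) (V * G₂)).comp (LinearMap.snd (ZMod 2) _ _))))
    ((vecL n).comp ((Polynomial.modByMonicHom (X ^ n - 1)).comp
      ((LinearMap.mulRight (ZMod 2) (V * G₁)).comp (LinearMap.fst (ZMod 2) _ _) +
       (LinearMap.mulRight (ZMod 2) G₂).comp (LinearMap.snd (ZMod 2) _ _))))

/-! Reduction modulo xⁿ − 1 followed by taking coefficients is injective on residues, so `(a, b)`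
encodes the zero word iff xⁿ − 1 divides both `a·v·g₁ + b·g₂` and `a·g₁ + b·v·g₂`. Eliminating
with `v`, xⁿ − 1 then divides `(v² − 1)·a·g₁` and `(v² − 1)·b·g₂`; in characteristic 2,
`v² − 1 = (v − 1)²` is coprime to xⁿ − 1, so the kernel is `h₁F₂[x] × h₂F₂[x]` where
`gᵢhᵢ = xⁿ − 1`. Hence the code is isomorphic to `F₂[x]/(h₁) × F₂[x]/(h₂)`, of dimension
`(n − deg g₁) + (n − deg g₂)`. -/

theorem dvd_mul_add_and_dvd_add_mul_iff {R : Type*} [CommRing R] {h v x y : R}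
    (hv : IsCoprime ((v - 1) * (v + 1)) h) :
    h ∣ v * x + y ∧ h ∣ x + v * y ↔ h ∣ x ∧ h ∣ y := by
  refine ⟨fun ⟨hl, hr⟩ => ⟨?_, ?_⟩, fun ⟨hx, hy⟩ => ⟨?_, ?_⟩⟩
  · refine hv.symm.dvd_of_dvd_mul_left ?_
    have e : (v - 1) * (v + 1) * x = v * (v * x + y) - (x + v * y) := by ring
    exact e ▸ dvd_sub (hl.mul_left v) hr
  · refine hv.symm.dvd_of_dvd_mul_left ?_
    have e : (v - 1) * (v + 1) * y = v * (x + v * y) - (v * x + y) := by ring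
    exact e ▸ dvd_sub (hr.mul_left v) hl
  · exact dvd_add (hx.mul_left v) hy
  · exact dvd_add hx (hy.mul_left v)

theorem finrank_range_eq_of_ker_eq {K V W₁ W₂ : Type*} [DivisionRing K] [AddCommGroup V]
    [Module K V] [AddCommGroup W₁] [Module K W₁] [AddCommGroup W₂] [Module K W₂]
    {f : V →ₗ[K] W₁} {g : V →ₗ[K] W₂} (h : LinearMap.ker f = LinearMap.ker g) :
    Module.finrank K (LinearMap.range f) = Module.finrank K (LinearMap.range g) :=
  ((f.quotKerEquivRange.symm.trans (Submodule.quotEquivOfEq _ _ h)).trans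
    g.quotKerEquivRange).finrank_eq

theorem finrank_range_eq_natDegree_add_natDegree {K V : Type*} [Field K] [AddCommGroup V]
    [Module K V] (f : K[X] × K[X] →ₗ[K] V) {p q : K[X]} (hp : p ≠ 0) (hq : q ≠ 0)
    (hf : ∀ x, f x = 0 ↔ p ∣ x.1 ∧ q ∣ x.2) :
    Module.finrank K (LinearMap.range f) = p.natDegree + q.natDegree := by
  let Q := (Ideal.Quotient.mkₐ K (Ideal.span {p})).toLinearMap.prodMap
    (Ideal.Quotient.mkₐ K (Ideal.span {q})).toLinearMap
  have hker : LinearMap.ker f = LinearMap.ker Q := by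
    ext x
    simp [Q, hf, Ideal.Quotient.eq_zero_iff_mem, Ideal.mem_span_singleton]
  have hQ : Function.Surjective Q :=
    (Ideal.Quotient.mkₐ_surjective K _).prodMap (Ideal.Quotient.mkₐ_surjective K _)
  have : Module.Finite K (K[X] ⧸ Ideal.span {p}) := (AdjoinRoot.powerBasis hp).finite
  have : Module.Finite K (K[X] ⧸ Ideal.span {q}) := (AdjoinRoot.powerBasis hq).finite
  rw [finrank_range_eq_of_ker_eq hker, LinearMap.range_eq_top.2 hQ, finrank_top,
    Module.finrank_prod, finrank_quotient_span_eq_natDegree, finrank_quotient_span_eq_natDegree]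

theorem vecL_eq_zero_iff {n : ℕ} {p : (ZMod 2)[X]} (hp : p.degree < n) :
    vecL n p = 0 ↔ p = 0 := by
  refine ⟨fun h => ext fun i => ?_, fun h => h ▸ map_zero _⟩
  by_cases hi : i < n
  · simpa [vecL] using congrFun h ⟨i, hi⟩
  · exact coeff_eq_zero_of_degree_lt (hp.trans_le (by exact_mod_cast not_lt.1 hi))

theorem vecL_modByMonic_X_pow_sub_one_eq_zero_iff {n : ℕ} (hn : 0 < n) (p : (ZMod 2)[X]) :
    vecL n (p %ₘ (X ^ n - 1)) = 0 ↔ X ^ n - 1 ∣ p := by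
  have hmon : (X ^ n - 1 : (ZMod 2)[X]).Monic := leadingCoeff_X_pow_sub_one hn
  have hdeg : (X ^ n - 1 : (ZMod 2)[X]).degree = n := by
    rw [← C_1]; exact degree_X_pow_sub_C hn 1
  rw [vecL_eq_zero_iff (hdeg ▸ degree_modByMonic_lt p hmon), modByMonic_eq_zero_iff_dvd hmon]

theorem cwL_eq_zero_iff {n : ℕ} (hn : 0 < n) {g₁ g₂ v : (ZMod 2)[X]}
    (hv : IsCoprime (v - 1) (X ^ n - 1)) (a b : (ZMod 2)[X]) :
    cwL n g₁ g₂ v (a, b) = 0 ↔ X ^ n - 1 ∣ a * g₁ ∧ X ^ n - 1 ∣ b * g₂ := by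
  have hv' : IsCoprime ((v - 1) * (v + 1)) (X ^ n - 1) := by
    rw [← CharTwo.sub_eq_add]; exact hv.mul_left hv
  have e : cwL n g₁ g₂ v (a, b) = (vecL n ((v * (a * g₁) + b * g₂) %ₘ (X ^ n - 1)),
      vecL n ((a * g₁ + v * (b * g₂)) %ₘ (X ^ n - 1))) := by
    rw [mul_left_comm v a, mul_left_comm v b]; rfl
  rw [e, Prod.mk_eq_zero, vecL_modByMonic_X_pow_sub_one_eq_zero_iff hn,
    vecL_modByMonic_X_pow_sub_one_eq_zero_iff hn, dvd_mul_add_and_dvd_add_mul_iff hv']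

theorem stmt_0_general (n : ℕ) (hn : 0 < n) (g₁ g₂ v : Polynomial (ZMod 2))
    (hdvd₁ : g₁ ∣ X ^ n - 1) (hdvd₂ : g₂ ∣ X ^ n - 1)
    (hvcop : IsCoprime (v - 1) (X ^ n - 1)) :
    Module.finrank (ZMod 2) ↥(QCCode n g₁ g₂ v) =
      2 * n - g₁.natDegree - g₂.natDegree := by
  obtain ⟨h₁, hfac₁⟩ := hdvd₁
  obtain ⟨h₂, hfac₂⟩ := hdvd₂
  have hne : (X ^ n - 1 : (ZMod 2)[X]) ≠ 0 := X_pow_sub_C_ne_zero hn 1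
  obtain ⟨hg₁, hh₁⟩ := mul_ne_zero_iff.1 (hfac₁ ▸ hne)
  obtain ⟨hg₂, hh₂⟩ := mul_ne_zero_iff.1 (hfac₂ ▸ hne)
  have hker (x : (ZMod 2)[X] × (ZMod 2)[X]) : cwL n g₁ g₂ v x = 0 ↔ h₁ ∣ x.1 ∧ h₂ ∣ x.2 := by
    rw [cwL_eq_zero_iff hn hvcop, mul_comm x.1, mul_comm x.2]
    exact and_congr (hfac₁ ▸ mul_dvd_mul_iff_left hg₁) (hfac₂ ▸ mul_dvd_mul_iff_left hg₂)
  have hdeg : (X ^ n - 1 : (ZMod 2)[X]).natDegree = n := by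
    simpa using natDegree_X_pow_sub_C (n := n) (r := (1 : ZMod 2))
  have hsum₁ : g₁.natDegree + h₁.natDegree = n := by rw [← natDegree_mul hg₁ hh₁, ← hfac₁, hdeg]
  have hsum₂ : g₂.natDegree + h₂.natDegree = n := by rw [← natDegree_mul hg₂ hh₂, ← hfac₂, hdeg]
  rw [QCCode, finrank_range_eq_natDegree_add_natDegree _ hh₁ hh₂ hker]
  omega

/-- the two-generator quasi-cyclic code `C(g₁,g₂,v)` has
`F₂`-dimension `2n − deg g₁ − deg g₂`. -/
theorem stmt_0 (n : ℕ) (hn : 0 < n) (g₁ g₂ v : Polynomial (ZMod 2))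
    (hdeg₁ : g₁.natDegree < n) (hdeg₂ : g₂.natDegree < n) (hdegv : v.natDegree < n)
    (hdvd₁ : g₁ ∣ X ^ n - 1) (hdvd₂ : g₂ ∣ X ^ n - 1)
    (hcop : IsCoprime g₁ g₂) (hvcop : IsCoprime (v - 1) (X ^ n - 1)) :
    Module.finrank (ZMod 2) ↥(QCCode n g₁ g₂ v) =
      2 * n - g₁.natDegree - g₂.natDegree :=
  stmt_0_general n hn g₁ g₂ v hdvd₁ hdvd₂ hvcop
end

section
/- Let n be a positive integer and let g₁, g₂, v, a, b ∈ F₂[x] with g₁ | xⁿ−1, g₂ | xⁿ−1, gcd(g₁, g₂) = 1 and gcd(v−1, xⁿ−1) = 1. If xⁿ−1 divides a·v·g₁ + b·g₂ and xⁿ−1 divides a·g₁ + b·v·g₂, then xⁿ−1 divides a·g₁ and xⁿ−1 divides b·g₂. Equivalently, the one-generator quasi-cyclic code {([a·v·g₁ mod xⁿ−1],[a·g₁ mod xⁿ−1]) : a ∈ F₂[x]} and the one-generator quasi-cyclic code {([b·g₂ mod xⁿ−1],[b·v·g₂ mod xⁿ−1]) : b ∈ F₂[x]} intersect only in the zero vector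 of F₂^{2n}. -/
open Polynomial

/-- In characteristic two, `(v - 1)² x = v (v x + y) - (x + v y)`. -/
theorem CharTwo.dvd_of_dvd_mul_add_of_dvd_add_mul {R : Type*} [CommRing R] [CharP R 2]
    {m v x y : R} (hv : IsCoprime (v - 1) m) (h₁ : m ∣ v * x + y) (h₂ : m ∣ x + v * y) :
    m ∣ x := by
  have hsq : m ∣ (v - 1) ^ 2 * x := by
    have key : (v - 1) ^ 2 * x = v * (v * x + y) - (x + v * y) + 2 * (x - v * x) := by ring
    rw [key, CharTwo.two_eq_zero, zero_mul, add_zero]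
    exact dvd_sub (h₁.mul_left v) h₂
  exact hv.pow_left.symm.dvd_of_dvd_mul_left hsq

theorem eq_of_vecL_eq_of_degree_lt {n : ℕ} {p q : Polynomial (ZMod 2)}
    (hp : p.degree < n) (hq : q.degree < n) (h : vecL n p = vecL n q) : p = q := by
  ext i
  by_cases hi : i < n
  · simpa [vecL] using congrFun h ⟨i, hi⟩
  · have hni : (n : WithBot ℕ) ≤ i := by exact_mod_cast not_lt.1 hi
    rw [coeff_eq_zero_of_degree_lt (hp.trans_le hni), coeff_eq_zero_of_degree_lt (hq.trans_le hni)]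

theorem vecL_modByMonic_eq_iff {n : ℕ} {m : Polynomial (ZMod 2)} (hm : m.Monic)
    (hdeg : m.degree ≤ n) (p q : Polynomial (ZMod 2)) :
    vecL n (p %ₘ m) = vecL n (q %ₘ m) ↔ m ∣ p - q := by
  have hlt : ∀ r : Polynomial (ZMod 2), (r %ₘ m).degree < n :=
    fun r => (degree_modByMonic_lt r hm).trans_le hdeg
  rw [← modByMonic_eq_zero_iff_dvd hm, sub_modByMonic, sub_eq_zero]
  exact ⟨eq_of_vecL_eq_of_degree_lt (hlt p) (hlt q), congrArg _⟩

theorem vecL_modByMonic_eq_zero {n : ℕ} {m p : Polynomial (ZMod 2)} (hm : m.Monic) (h : m ∣ p) :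
    vecL n (p %ₘ m) = 0 := by
  rw [(modByMonic_eq_zero_iff_dvd hm).2 h, map_zero]

theorem stmt_1_general (n : ℕ) (hn : 0 < n) (g₁ g₂ v : Polynomial (ZMod 2))
    (hvcop : IsCoprime (v - 1) (X ^ n - 1)) :
    (∀ a b : Polynomial (ZMod 2),
        (X ^ n - 1) ∣ (a * v * g₁ + b * g₂) → (X ^ n - 1) ∣ (a * g₁ + b * v * g₂) →
        (X ^ n - 1) ∣ a * g₁ ∧ (X ^ n - 1) ∣ b * g₂) ∧
    (Set.range (fun a : Polynomial (ZMod 2) =>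
        (vecL n ((a * v * g₁) %ₘ (X ^ n - 1)), vecL n ((a * g₁) %ₘ (X ^ n - 1)))) ∩
     Set.range (fun b : Polynomial (ZMod 2) =>
        (vecL n ((b * g₂) %ₘ (X ^ n - 1)), vecL n ((b * v * g₂) %ₘ (X ^ n - 1)))) =
      {(0 : (Fin n → ZMod 2) × (Fin n → ZMod 2))}) := by
  have hm : (X ^ n - 1 : Polynomial (ZMod 2)).Monic := by
    simpa using monic_X_pow_sub_C (1 : ZMod 2) hn.ne'
  have hdeg : (X ^ n - 1 : Polynomial (ZMod 2)).degree ≤ n := by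
    simpa using (degree_X_pow_sub_C hn (1 : ZMod 2)).le
  have hdvd : ∀ a b : Polynomial (ZMod 2),
      (X ^ n - 1) ∣ (a * v * g₁ + b * g₂) → (X ^ n - 1) ∣ (a * g₁ + b * v * g₂) →
      (X ^ n - 1) ∣ a * g₁ ∧ (X ^ n - 1) ∣ b * g₂ := by
    intro a b h₁ h₂
    rw [mul_comm a v, mul_assoc] at h₁
    rw [mul_comm b v, mul_assoc] at h₂
    exact ⟨CharTwo.dvd_of_dvd_mul_add_of_dvd_add_mul hvcop h₁ h₂,
      CharTwo.dvd_of_dvd_mul_add_of_dvd_add_mul hvcop (by rwa [add_comm]) (by rwa [add_comm])⟩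
  refine ⟨hdvd, Set.eq_singleton_iff_unique_mem.2 ⟨⟨⟨0, by simp⟩, ⟨0, by simp⟩⟩, ?_⟩⟩
  rintro _ ⟨⟨a, rfl⟩, ⟨b, hab⟩⟩
  obtain ⟨h₁, h₂⟩ := Prod.ext_iff.1 hab
  rw [vecL_modByMonic_eq_iff hm hdeg, CharTwo.sub_eq_add (b * g₂), add_comm] at h₁
  rw [vecL_modByMonic_eq_iff hm hdeg, CharTwo.sub_eq_add (b * v * g₂), add_comm] at h₂
  obtain ⟨ha, -⟩ := hdvd a b h₁ h₂
  exact Prod.ext (vecL_modByMonic_eq_zero hm (mul_right_comm a g₁ v ▸ ha.mul_right v))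
    (vecL_modByMonic_eq_zero hm ha)

/-- under the stated coprimality conditions, if `xⁿ−1 ∣ a·v·g₁ + b·g₂` and
`xⁿ−1 ∣ a·g₁ + b·v·g₂` then `xⁿ−1 ∣ a·g₁` and `xⁿ−1 ∣ b·g₂`; equivalently, the two
one-generator quasi-cyclic codes intersect only in the zero vector of `F₂^{2n}`. -/
theorem stmt_1 (n : ℕ) (hn : 0 < n) (g₁ g₂ v : Polynomial (ZMod 2))
    (hdvd₁ : g₁ ∣ X ^ n - 1) (hdvd₂ : g₂ ∣ X ^ n - 1)
    (hcop : IsCoprime g₁ g₂) (hvcop : IsCoprime (v - 1) (X ^ n - 1)) :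
    (∀ a b : Polynomial (ZMod 2),
        (X ^ n - 1) ∣ (a * v * g₁ + b * g₂) → (X ^ n - 1) ∣ (a * g₁ + b * v * g₂) →
        (X ^ n - 1) ∣ a * g₁ ∧ (X ^ n - 1) ∣ b * g₂) ∧
    (Set.range (fun a : Polynomial (ZMod 2) =>
        (vecL n ((a * v * g₁) %ₘ (X ^ n - 1)), vecL n ((a * g₁) %ₘ (X ^ n - 1)))) ∩
     Set.range (fun b : Polynomial (ZMod 2) =>
        (vecL n ((b * g₂) %ₘ (X ^ n - 1)), vecL n ((b * v * g₂) %ₘ (X ^ n - 1)))) =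
      {(0 : (Fin n → ZMod 2) × (Fin n → ZMod 2))}) :=
  stmt_1_general n hn g₁ g₂ v hvcop
end

section
/- Let n be a positive integer, let g₁, g₂, v ∈ F₂[x] have degree less than n with g₁·h₁ = xⁿ−1 and g₂·h₂ = xⁿ−1 for some h₁, h₂ ∈ F₂[x], and set g₁^⊥ = x^{deg h₁}·h₁(1/x), g₂^⊥ = x^{deg h₂}·h₂(1/x). Then for all a, b, c, d ∈ F₂[x], the symplectic inner product of the vector ([a·v·g₁ + b·g₂ mod xⁿ−1], [a·g₁ + b·v·g₂ mod xⁿ−1]) and the vector ([c·g₁^⊥ + d·v̄·g₂^⊥ mod xⁿ−1], [c·v̄·g₁^⊥ + d·g₂^⊥ mod xⁿ−1]) is zero, where v̄ denotes the polynomial v₀ + v_{n−1}x + v_{n−2}x² + ⋯ + v₁x^{n−1}. -/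
open Polynomial

/-!
In `F₂[x]/(xⁿ − 1)` the substitution `x ↦ x^{n−1} = x⁻¹`, i.e. `expand _ (n − 1)`, is a ring
involution `p ↦ p*`, and the Euclidean inner product of the coefficient vectors of two residues
`p, q` is the constant coefficient of `p·q*`. So the symplectic product in question is the
constant coefficient of `(a v g₁ + b g₂)(c v̄ g₁^⊥ + d g₂^⊥)* − (a g₁ + b v g₂)(c g₁^⊥ + d v̄ g₂^⊥)*`.
Now `v̄* = v` and `(g^⊥)* = x^{−deg h}·h`, so `g·(g^⊥)* = x^{−deg h}(xⁿ − 1) = 0`. Expanding,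
the difference is `a c* (v² − 1)·g₁(g₁^⊥)* + b d* (1 − v²)·g₂(g₂^⊥)* = 0`.
-/

section

variable {R : Type*} [CommRing R] {n : ℕ}

lemma Nat.add_mul_pred_mod_eq_zero_iff (hn : 0 < n) (i j : ℕ) :
    (i + j * (n - 1)) % n = 0 ↔ i % n = j % n := by
  rw [← Nat.zero_mod n, ← ZMod.natCast_eq_natCast_iff', ← ZMod.natCast_eq_natCast_iff',
    Nat.cast_add, Nat.cast_mul, Nat.cast_pred hn, ZMod.natCast_self]
  simp [← sub_eq_add_neg, sub_eq_zero]

lemma pow_pred_pow_eq_pow_neg {M : Type*} [Monoid M] {x : M} (hx : x ^ n = 1) (i : Fin n) :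
    (x ^ (n - 1)) ^ (i : ℕ) = x ^ ((-i : Fin n) : ℕ) := by
  rw [← pow_mul, pow_eq_pow_mod _ hx, pow_eq_pow_mod ((-i : Fin n) : ℕ) hx]
  congr 1
  rw [Fin.val_neg', Nat.mod_mod, ← ZMod.natCast_eq_natCast_iff', Nat.cast_mul,
    Nat.cast_pred i.pos, Nat.cast_sub i.isLt.le, ZMod.natCast_self]
  ring

lemma Polynomial.monic_X_pow_sub_one (hn : 0 < n) : (X ^ n - 1 : R[X]).Monic := by
  simpa using monic_X_pow_sub_C (1 : R) hn.ne'

lemma AdjoinRoot.root_X_pow_sub_one_pow : root (X ^ n - 1 : R[X]) ^ n = 1 := by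
  have h := mk_self (f := (X ^ n - 1 : R[X]))
  rwa [map_sub, map_pow, mk_X, map_one, sub_eq_zero] at h

namespace Polynomial

lemma monomial_modByMonic_X_pow_sub_one [Nontrivial R] (hn : 0 < n) (i : ℕ) (r : R) :
    monomial i r %ₘ (X ^ n - 1) = monomial (i % n) r := by
  have hdvd : X ^ n - 1 ∣ monomial i r - monomial (i % n) r := by
    rw [← AdjoinRoot.mk_eq_mk, ← C_mul_X_pow_eq_monomial, ← C_mul_X_pow_eq_monomial, map_mul,
      map_mul, map_pow, map_pow, AdjoinRoot.mk_X,
      ← pow_eq_pow_mod i AdjoinRoot.root_X_pow_sub_one_pow]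
  rw [modByMonic_eq_of_dvd_sub (monic_X_pow_sub_one hn) hdvd,
    (modByMonic_eq_self_iff (monic_X_pow_sub_one hn)).2]
  calc degree (monomial (i % n) r) ≤ (i % n : ℕ) := degree_monomial_le _ _
    _ < n := by exact_mod_cast Nat.mod_lt i hn
    _ = degree (X ^ n - 1 : R[X]) := by rw [← C_1, degree_X_pow_sub_C hn]

theorem sum_coeff_mul_coeff_modByMonic_X_pow_sub_one [Nontrivial R] (hn : 0 < n) (p q : R[X]) :
    ∑ k : Fin n, (p %ₘ (X ^ n - 1)).coeff k * (q %ₘ (X ^ n - 1)).coeff k =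
      ((p * expand R (n - 1) q) %ₘ (X ^ n - 1)).coeff 0 := by
  induction p using Polynomial.induction_on' with
  | add p p' hp hp' =>
    simp only [add_modByMonic, coeff_add, add_mul, Finset.sum_add_distrib, hp, hp']
  | monomial i r =>
    induction q using Polynomial.induction_on' with
    | add q q' hq hq' =>
      simp only [add_modByMonic, coeff_add, mul_add, map_add, Finset.sum_add_distrib, hq, hq']
    | monomial j s =>
      rw [expand_monomial, monomial_mul_monomial, monomial_modByMonic_X_pow_sub_one hn,
        monomial_modByMonic_X_pow_sub_one hn, monomial_modByMonic_X_pow_sub_one hn,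
        Fin.sum_univ_eq_sum_range
          (fun k => (monomial (i % n) r).coeff k * (monomial (j % n) s).coeff k)]
      simp [coeff_monomial, ite_mul, Finset.sum_ite_eq, Nat.mod_lt _ hn,
        Nat.add_mul_pred_mod_eq_zero_iff hn]

theorem X_pow_sub_one_dvd_mul_expand_reverse (hn : 0 < n) {g h : R[X]}
    (he : g * h = X ^ n - 1) : X ^ n - 1 ∣ g * expand R (n - 1) h.reverse := by
  set x := AdjoinRoot.root (X ^ n - 1 : R[X])
  have hx : x * x ^ (n - 1) = 1 := by
    rw [← pow_succ', Nat.sub_add_cancel hn, AdjoinRoot.root_X_pow_sub_one_pow]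
  let : Invertible x := ⟨x ^ (n - 1), by rw [mul_comm, hx], hx⟩
  have hrev : AdjoinRoot.mk _ (expand R (n - 1) h.reverse) * x ^ h.natDegree =
      AdjoinRoot.mk _ h := by
    rw [← AdjoinRoot.aeval_eq, ← AdjoinRoot.aeval_eq, expand_aeval, aeval_def, aeval_def]
    exact eval₂_reverse_mul_pow _ x h
  have hzero : AdjoinRoot.mk _ (g * expand R (n - 1) h.reverse) * x ^ h.natDegree = 0 := by
    rw [map_mul, mul_assoc, hrev, ← map_mul, he, AdjoinRoot.mk_self]
  rw [← AdjoinRoot.mk_eq_zero]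
  exact ((isUnit_of_invertible x).pow _).mul_left_eq_zero.mp hzero

end Polynomial

end

lemma barPoly_eq_sum_fin {n : ℕ} (v : (ZMod 2)[X]) :
    barPoly n v = ∑ i : Fin n, C (v.coeff ((-i : Fin n) : ℕ)) * X ^ (i : ℕ) := by
  rw [barPoly, ← Fin.sum_univ_eq_sum_range
    (fun i => C (v.coeff (if i = 0 then 0 else n - i)) * X ^ i)]
  refine Finset.sum_congr rfl fun i _ => ?_
  rw [Fin.val_neg']
  split_ifs with h
  · simp [h]
  · rw [Nat.mod_eq_of_lt (by omega)]

lemma mk_expand_barPoly {n : ℕ} (hn : 0 < n) {v : (ZMod 2)[X]} (hv : v.natDegree < n) :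
    AdjoinRoot.mk (X ^ n - 1) (expand (ZMod 2) (n - 1) (barPoly n v)) =
      AdjoinRoot.mk (X ^ n - 1) v := by
  have : NeZero n := ⟨hn.ne'⟩
  have hv' : v = ∑ i : Fin n, C (v.coeff i) * X ^ (i : ℕ) := by
    rw [Fin.sum_univ_eq_sum_range (fun i => C (v.coeff i) * X ^ i)]
    simpa [C_mul_X_pow_eq_monomial] using as_sum_range' v n hv
  conv_rhs => rw [hv']
  rw [← AdjoinRoot.aeval_eq, ← AdjoinRoot.aeval_eq, expand_aeval, barPoly_eq_sum_fin]
  simp only [map_sum, map_mul, aeval_C, map_pow, aeval_X,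
    pow_pred_pow_eq_pow_neg AdjoinRoot.root_X_pow_sub_one_pow]
  exact Equiv.sum_comp (Equiv.neg (Fin n))
    fun i => algebraMap (ZMod 2) (AdjoinRoot (X ^ n - 1 : (ZMod 2)[X])) (v.coeff i) *
      AdjoinRoot.root (X ^ n - 1 : (ZMod 2)[X]) ^ (i : ℕ)

lemma sinner_vecL_modByMonic {n : ℕ} (hn : 0 < n) (p₁ p₂ q₁ q₂ : (ZMod 2)[X]) :
    sinner n (vecL n (p₁ %ₘ (X ^ n - 1)), vecL n (p₂ %ₘ (X ^ n - 1)))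
        (vecL n (q₁ %ₘ (X ^ n - 1)), vecL n (q₂ %ₘ (X ^ n - 1))) =
      ((p₁ * expand _ (n - 1) q₂ - p₂ * expand _ (n - 1) q₁) %ₘ (X ^ n - 1)).coeff 0 := by
  simp only [sinner, vecL, LinearMap.pi_apply, lcoeff_apply]
  rw [Finset.sum_sub_distrib, sum_coeff_mul_coeff_modByMonic_X_pow_sub_one hn,
    sum_coeff_mul_coeff_modByMonic_X_pow_sub_one hn, sub_modByMonic, coeff_sub]

theorem stmt_3_general (n : ℕ) (hn : 0 < n) (g₁ g₂ v h₁ h₂ : Polynomial (ZMod 2))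
    (hdegv : v.natDegree < n)
    (he₁ : g₁ * h₁ = X ^ n - 1) (he₂ : g₂ * h₂ = X ^ n - 1)
    (a b c d : Polynomial (ZMod 2)) :
    sinner n (cwL n g₁ g₂ v (a, b))
      (vecL n ((c * h₁.reverse + d * (barPoly n v * h₂.reverse)) %ₘ (X ^ n - 1)),
       vecL n ((c * (barPoly n v * h₁.reverse) + d * h₂.reverse) %ₘ (X ^ n - 1))) = 0 := by
  have hcw : cwL n g₁ g₂ v (a, b) = (vecL n ((a * (v * g₁) + b * g₂) %ₘ (X ^ n - 1)),
      vecL n ((a * g₁ + b * (v * g₂)) %ₘ (X ^ n - 1))) := rfl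
  rw [hcw, sinner_vecL_modByMonic hn, (modByMonic_eq_zero_iff_dvd (monic_X_pow_sub_one hn)).2,
    coeff_zero]
  have F₁ := AdjoinRoot.mk_eq_zero.2 (X_pow_sub_one_dvd_mul_expand_reverse hn he₁)
  have F₂ := AdjoinRoot.mk_eq_zero.2 (X_pow_sub_one_dvd_mul_expand_reverse hn he₂)
  rw [← AdjoinRoot.mk_eq_zero]
  simp only [map_sub, map_add, map_mul, mk_expand_barPoly hn hdegv] at F₁ F₂ ⊢
  set π := AdjoinRoot.mk (X ^ n - 1 : (ZMod 2)[X])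
  set σ := expand (ZMod 2) (n - 1)
  linear_combination (π a * π (σ c) * (π v ^ 2 - 1)) * F₁ + (π b * π (σ d) * (1 - π v ^ 2)) * F₂

/-- every generator-type codeword of `C(g₁,g₂,v)` is symplectically orthogonal
to every vector `([c·g₁^⊥ + d·v̄·g₂^⊥ mod xⁿ−1], [c·v̄·g₁^⊥ + d·g₂^⊥ mod xⁿ−1])`,
where `g₁^⊥ = h₁.reverse = x^{deg h₁}·h₁(1/x)` and likewise for `g₂^⊥`. -/
theorem stmt_3 (n : ℕ) (hn : 0 < n) (g₁ g₂ v h₁ h₂ : Polynomial (ZMod 2))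
    (hdeg₁ : g₁.natDegree < n) (hdeg₂ : g₂.natDegree < n) (hdegv : v.natDegree < n)
    (he₁ : g₁ * h₁ = X ^ n - 1) (he₂ : g₂ * h₂ = X ^ n - 1)
    (a b c d : Polynomial (ZMod 2)) :
    sinner n (cwL n g₁ g₂ v (a, b))
      (vecL n ((c * h₁.reverse + d * (barPoly n v * h₂.reverse)) %ₘ (X ^ n - 1)),
       vecL n ((c * (barPoly n v * h₁.reverse) + d * h₂.reverse) %ₘ (X ^ n - 1))) = 0 :=
  stmt_3_general n hn g₁ g₂ v h₁ h₂ hdegv he₁ he₂ a b c d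
end

section
/- Let n be a positive integer and let v ∈ F₂[x] have degree less than n. If gcd(v − 1, xⁿ−1) = 1 in F₂[x], then gcd(v̄ − 1, xⁿ−1) = 1, where v̄ denotes the polynomial v₀ + v_{n−1}x + v_{n−2}x² + ⋯ + v₁x^{n−1} obtained from v = v₀+v₁x+⋯+v_{n−1}x^{n−1}. -/
open Polynomial

/-!
The substitution `x ↦ x^{n-1}` is a ring endomorphism of `F₂[x]`; since `x^{n-1}` is the inverse
of `x` modulo `xⁿ − 1`, it maps `xⁿ − 1` into the ideal `(xⁿ − 1)` and sends `v` to `v̄` modulo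
`xⁿ − 1`. Applying it to a Bézout identity for `v − 1` and `xⁿ − 1` gives one for `v̄ − 1`.
-/

theorem pow_sub_one_dvd_pow_sub_pow_of_modEq {R : Type*} [CommRing R] (x : R) {n a b : ℕ}
    (h : a ≡ b [MOD n]) : x ^ n - 1 ∣ x ^ a - x ^ b := by
  wlog hab : a ≤ b generalizing a b
  · exact dvd_sub_comm.mp (this h.symm (le_of_not_ge hab))
  have hdvd : x ^ n - 1 ∣ x ^ (b - a) - 1 :=
    dvd_pow_sub_one_of_dvd ((Nat.modEq_iff_dvd' hab).mp h)
  have hsplit : x ^ a - x ^ b = -(x ^ a * (x ^ (b - a) - 1)) := by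
    rw [mul_sub, ← pow_add, Nat.add_sub_cancel' hab]
    ring
  rw [hsplit]
  exact (hdvd.mul_left _).neg_right

theorem barPoly_eq_sum (n : ℕ) (v : Polynomial (ZMod 2)) :
    barPoly n v = ∑ k ∈ Finset.range n, C (v.coeff k) * X ^ (if k = 0 then 0 else n - k) := by
  set ι : ℕ → ℕ := fun k => if k = 0 then 0 else n - k
  have hι : ∀ k < n, ι k < n ∧ ι (ι k) = k := by
    intro k hk
    simp only [ι]
    split_ifs <;> omega
  simp only [← Finset.mem_range] at hι
  exact Finset.sum_nbij' ι ι (fun k hk => (hι k hk).1) (fun k hk => (hι k hk).1)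
    (fun k hk => (hι k hk).2) (fun k hk => (hι k hk).2)
    (fun k hk => by change _ = _ * X ^ ι (ι k); rw [(hι k hk).2])

theorem mul_pred_modEq_neg (n k : ℕ) (hk : k < n) :
    k * (n - 1) ≡ (if k = 0 then 0 else n - k) [MOD n] := by
  split_ifs with hk0
  · simp [hk0, Nat.ModEq]
  · refine (Nat.modEq_iff_dvd.mpr ⟨1 - k, ?_⟩)
    push_cast [Nat.one_le_of_lt hk, hk.le]
    ring

theorem X_pow_sub_one_dvd_aeval_X_pow_pred_sub_barPoly (n : ℕ) (v : Polynomial (ZMod 2))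
    (hv : v.natDegree < n) :
    (X ^ n - 1 : Polynomial (ZMod 2)) ∣
      aeval (X ^ (n - 1) : Polynomial (ZMod 2)) v - barPoly n v := by
  nth_rewrite 1 [v.as_sum_range' n hv]
  rw [map_sum, barPoly_eq_sum, ← Finset.sum_sub_distrib]
  refine Finset.dvd_sum fun k hk => ?_
  rw [aeval_monomial, ← pow_mul, mul_comm (n - 1) k, algebraMap_eq, ← mul_sub]
  exact (pow_sub_one_dvd_pow_sub_pow_of_modEq X
    (mul_pred_modEq_neg n k (Finset.mem_range.mp hk))).mul_left _

theorem stmt_4_general (n : ℕ) (v : Polynomial (ZMod 2)) (hdegv : v.natDegree < n)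
    (hvcop : IsCoprime (v - 1) (X ^ n - 1)) :
    IsCoprime (barPoly n v - 1) (X ^ n - 1) := by
  set σ := aeval (R := ZMod 2) (X ^ (n - 1) : Polynomial (ZMod 2))
  have hσ : X ^ n - 1 ∣ σ (X ^ n - 1) := by
    rw [map_sub, map_pow, aeval_X, map_one, ← pow_mul]
    exact dvd_pow_sub_one_of_dvd (dvd_mul_left n (n - 1))
  have hσv : IsCoprime (σ v - 1) (X ^ n - 1) := by
    simpa only [map_sub, map_one, RingHom.coe_coe] using
      (hvcop.map (σ : Polynomial (ZMod 2) →+* Polynomial (ZMod 2))).of_isCoprime_of_dvd_right hσ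
  obtain ⟨e, he⟩ := X_pow_sub_one_dvd_aeval_X_pow_pred_sub_barPoly n v hdegv
  have hbar : barPoly n v - 1 = σ v - 1 + (X ^ n - 1) * -e := by
    linear_combination -he
  rw [hbar]
  exact hσv.add_mul_left_left _

/-- if `gcd(v − 1, xⁿ−1) = 1` then `gcd(v̄ − 1, xⁿ−1) = 1`. -/
theorem stmt_4 (n : ℕ) (hn : 0 < n) (v : Polynomial (ZMod 2)) (hdegv : v.natDegree < n)
    (hvcop : IsCoprime (v - 1) (X ^ n - 1)) :
    IsCoprime (barPoly n v - 1) (X ^ n - 1) :=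
  stmt_4_general n v hdegv hvcop
end

section
/- Let n be a positive integer, let g₁, g₂, v ∈ F₂[x] have degree less than n with g₁·h₁ = xⁿ−1 and g₂·h₂ = xⁿ−1 for some h₁, h₂ ∈ F₂[x], gcd(g₁, g₂) = 1 and gcd(v−1, xⁿ−1) = 1, and set g₁^⊥ = x^{deg h₁}·h₁(1/x), g₂^⊥ = x^{deg h₂}·h₂(1/x). Then the symplectic dual of the two-generator quasi-cyclic code C(g₁,g₂,v) equals the F₂-linear code { ([c·g₁^⊥ + d·v̄·g₂^⊥ mod xⁿ−1], [c·v̄·g₁^⊥ + d·g₂^⊥ mod xⁿ−1]) : c, d ∈ F₂[x] }, where v̄ denotes the polynomial v₀ + v_{n−1}x + v_{n−2}x² + ⋯ + v₁x^{n−1}. -/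
open Polynomial

/-!
Identify `F₂ⁿ` with `R = F₂[x]/(xⁿ − 1)` through coefficient vectors and let `σ` be the
involution `x ↦ x⁻¹` of `R`. The dot product of two coefficient vectors is the constant
coefficient of `σ(z)·w`, a nondegenerate form, and in characteristic 2 the symplectic product
is symmetric; hence `(W₁, W₂)` lies in the symplectic dual of `C(g₁,g₂,v)` iff
`σg₁·(W₁ + σv·W₂) = 0` and `σg₂·(σv·W₁ + W₂) = 0`. The annihilator of `σgᵢ` is generated by
`σhᵢ`, hence by `gᵢ^⊥ = x^{deg hᵢ}·σhᵢ`, and the matrix `[[1, σv], [σv, 1]]` squares to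
`(σv − 1)²` times the identity, a unit because `v − 1` is invertible modulo `xⁿ − 1`.
Inverting it turns the two annihilator conditions into the stated parametrisation.
-/

lemma CharTwo.mul_add_mul_eq_zero_iff_exists {Q : Type*} [CommRing Q] [CharP Q 2]
    {g₁ g₂ h₁ h₂ v A B : Q} (hv : IsUnit (v - 1))
    (hann₁ : ∀ z, g₁ * z = 0 ↔ h₁ ∣ z) (hann₂ : ∀ z, g₂ * z = 0 ↔ h₂ ∣ z) :
    g₁ * (A + v * B) = 0 ∧ g₂ * (v * A + B) = 0 ↔
      ∃ c d, A = c * h₁ + d * (v * h₂) ∧ B = c * (v * h₁) + d * h₂ := by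
  have two : (2 : Q) = 0 := CharTwo.two_eq_zero
  rw [hann₁, hann₂]
  constructor
  · rintro ⟨⟨s, hs⟩, ⟨t, ht⟩⟩
    obtain ⟨e, he⟩ := hv.exists_left_inv
    have hu : e ^ 2 * (1 + v * v) = 1 := by
      linear_combination (e * (v - 1) + 1) * he + e ^ 2 * v * two
    refine ⟨e ^ 2 * s, e ^ 2 * t, ?_, ?_⟩
    · linear_combination (-A) * hu + e ^ 2 * hs + e ^ 2 * v * ht - e ^ 2 * v * B * two
    · linear_combination (-B) * hu + e ^ 2 * v * hs + e ^ 2 * ht - e ^ 2 * v * A * two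
  · rintro ⟨c, d, rfl, rfl⟩
    refine ⟨⟨(1 + v * v) * c, ?_⟩, ⟨(1 + v * v) * d, ?_⟩⟩
    · linear_combination d * v * h₂ * two
    · linear_combination c * v * h₁ * two

abbrev CyclicRing (R : Type*) [CommRing R] (n : ℕ) := AdjoinRoot (X ^ n - 1 : R[X])

namespace CyclicRing

open AdjoinRoot

variable {R : Type*} [CommRing R] {n : ℕ}

lemma root_pow_eq_one : root (X ^ n - 1 : R[X]) ^ n = 1 := by
  rw [← sub_eq_zero, ← mk_X, ← map_pow, ← map_one (mk _), ← map_sub, mk_self]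

lemma isUnit_mk_of_isCoprime {f : R[X]} (h : IsCoprime f (X ^ n - 1)) :
    IsUnit (mk (X ^ n - 1) f) := by
  obtain ⟨a, b, hab⟩ := h
  exact .of_mul_eq_one (mk _ a) <| by
    rw [← map_mul, ← map_one (mk _), mk_eq_mk]
    exact ⟨-b, by linear_combination hab⟩

variable (R n) in
noncomputable def reciprocalHom : CyclicRing R n →ₐ[R] CyclicRing R n :=
  liftAlgHom _ (Algebra.ofId R _) (root _ ^ (n - 1)) <| by
    rw [eval₂_sub, eval₂_X_pow, eval₂_one, ← pow_mul, mul_comm, pow_mul, root_pow_eq_one,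
      one_pow, sub_self]

lemma reciprocalHom_root : reciprocalHom R n (root _) = root _ ^ (n - 1) :=
  liftAlgHom_root ..

lemma root_mul_reciprocalHom_root [NeZero n] :
    root (X ^ n - 1 : R[X]) * reciprocalHom R n (root _) = 1 := by
  rw [reciprocalHom_root, ← pow_succ', Nat.sub_add_cancel NeZero.one_le, root_pow_eq_one]

lemma reciprocalHom_comp_self [NeZero n] :
    (reciprocalHom R n).comp (reciprocalHom R n) = AlgHom.id R _ :=
  AdjoinRoot.algHom_ext <| .symm <| left_inv_eq_right_inv root_mul_reciprocalHom_root <| by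
    rw [AlgHom.comp_apply, ← map_mul, root_mul_reciprocalHom_root, map_one]

variable (R n) in
noncomputable def reciprocal [NeZero n] : CyclicRing R n ≃ₐ[R] CyclicRing R n :=
  AlgEquiv.ofAlgHom (reciprocalHom R n) (reciprocalHom R n) reciprocalHom_comp_self
    reciprocalHom_comp_self

variable [NeZero n]

lemma reciprocal_reciprocal (z : CyclicRing R n) : reciprocal R n (reciprocal R n z) = z :=
  AlgHom.congr_fun reciprocalHom_comp_self z

lemma root_pow_mul_reciprocal_root_pow (k : ℕ) :
    root (X ^ n - 1 : R[X]) ^ k * reciprocal R n (root _ ^ k) = 1 := by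
  rw [map_pow, ← mul_pow]
  exact (congrArg (· ^ k) root_mul_reciprocalHom_root).trans (one_pow k)

lemma reciprocal_root_pow {k : ℕ} (hk : k ≤ n) :
    reciprocal R n (root _ ^ k) = root (X ^ n - 1 : R[X]) ^ (n - k) :=
  left_inv_eq_right_inv ((mul_comm _ _).trans (root_pow_mul_reciprocal_root_pow k))
    (by rw [← pow_add, Nat.add_sub_cancel' hk, root_pow_eq_one])

lemma mk_reflect {f : R[X]} {N : ℕ} (hf : f.natDegree ≤ N) :
    mk _ (reflect N f) = root (X ^ n - 1 : R[X]) ^ N * reciprocal R n (mk _ f) := by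
  let : Invertible (reciprocal R n (root _)) := invertibleOfLeftInverse _ (root _) <| by
    simpa using root_pow_mul_reciprocal_root_pow (R := R) (n := n) 1
  have h : mk _ (reflect N f) * reciprocal R n (root _ ^ N) = reciprocal R n (mk _ f) := by
    rw [← aeval_eq, ← aeval_eq, ← aeval_algHom_apply, map_pow, aeval_def, aeval_def]
    exact eval₂_reflect_mul_pow _ (reciprocal R n (root _)) N f hf
  rw [← h, mul_left_comm, root_pow_mul_reciprocal_root_pow, mul_one]

lemma monic_X_pow_sub_one : (X ^ n - 1 : R[X]).Monic := by
  simpa using monic_X_pow_sub_C (1 : R) (NeZero.ne n)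

instance [IsDomain R] (p : ℕ) [CharP R p] : CharP (CyclicRing R n) p :=
  charP_of_injective_algebraMap (of.injective_of_degree_ne_zero <| by
    rw [← C_1, degree_X_pow_sub_C (Nat.pos_of_neZero n)]; exact_mod_cast NeZero.ne n) p

lemma mk_mul_eq_zero_iff {g h : R[X]} (hgh : g * h = X ^ n - 1) {z : CyclicRing R n} :
    mk _ g * z = 0 ↔ mk _ h ∣ z := by
  constructor
  · obtain ⟨z, rfl⟩ := mk_surjective z
    rw [← map_mul, mk_eq_zero]
    rintro ⟨q, hq⟩
    have : (X ^ n - 1) * (z - h * q) = 0 := by linear_combination h * hq - z * hgh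
    rw [monic_X_pow_sub_one.mul_right_eq_zero_iff, sub_eq_zero] at this
    exact ⟨mk _ q, by rw [this, map_mul]⟩
  · rintro ⟨q, rfl⟩
    rw [← mul_assoc, ← map_mul, hgh, mk_self, zero_mul]

lemma mk_reverse (f : R[X]) :
    mk _ f.reverse = root (X ^ n - 1 : R[X]) ^ f.natDegree * reciprocal R n (mk _ f) :=
  mk_reflect le_rfl

lemma reciprocal_mk_mul_eq_zero_iff {g h : R[X]} (hgh : g * h = X ^ n - 1)
    {z : CyclicRing R n} : reciprocal R n (mk _ g) * z = 0 ↔ mk _ h.reverse ∣ z :=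
  calc reciprocal R n (mk _ g) * z = 0 ↔ mk _ g * reciprocal R n z = 0 := by
        rw [← (reciprocal R n).injective.eq_iff, map_mul, reciprocal_reciprocal, map_zero]
    _ ↔ mk _ h ∣ reciprocal R n z := mk_mul_eq_zero_iff hgh
    _ ↔ reciprocal R n (mk _ h) ∣ z := by
        rw [← map_dvd_iff (reciprocal R n), reciprocal_reciprocal]
    _ ↔ mk _ h.reverse ∣ z := by
        rw [mk_reverse, IsUnit.mul_left_dvd (.of_mul_eq_one _
          (root_pow_mul_reciprocal_root_pow _))]

variable [Nontrivial R]

variable (R n) in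
noncomputable def basis : Module.Basis (Fin n) R (CyclicRing R n) :=
  (powerBasis' monic_X_pow_sub_one).basis.reindex (finCongr (by
    rw [powerBasis'_dim, ← C_1, natDegree_X_pow_sub_C]))

lemma basis_apply (i : Fin n) : basis R n i = root _ ^ (i : ℕ) := by
  simp [basis]

lemma basis_repr_mk (f : R[X]) (i : Fin n) :
    (basis R n).repr (mk _ f) i = (f %ₘ (X ^ n - 1)).coeff i := by
  simp only [basis, Module.Basis.repr_reindex_apply]
  exact (powerBasisAux'_repr_apply_to_fun _ _ _).trans (by rw [modByMonicHom_mk]; rfl)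

lemma basis_equivFun_root_pow_zero {k : ℕ} (hk : k < n) :
    (basis R n).equivFun (root _ ^ k) 0 = if k = 0 then 1 else 0 := by
  rw [← basis_apply ⟨k, hk⟩]
  simp [Module.Basis.equivFun_self, Fin.ext_iff]

lemma basis_equivFun_reciprocal_root_pow_mul (i : Fin n) (z : CyclicRing R n) :
    (basis R n).equivFun (reciprocal R n (root _ ^ (i : ℕ)) * z) 0 =
      (basis R n).equivFun z i := by
  have h : (LinearMap.proj 0 ∘ₗ (basis R n).equivFun.toLinearMap) ∘ₗ
      LinearMap.mulLeft R (reciprocal R n (root _ ^ (i : ℕ))) =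
      LinearMap.proj i ∘ₗ (basis R n).equivFun.toLinearMap := by
    refine (basis R n).ext fun j => ?_
    simp only [LinearMap.comp_apply, LinearMap.mulLeft_apply, LinearEquiv.coe_coe,
      LinearMap.proj_apply, Module.Basis.equivFun_self]
    rw [basis_apply, reciprocal_root_pow i.is_lt.le, ← pow_add]
    rcases le_or_gt (i : ℕ) j with hij | hij
    · rw [show n - i + j = n + (j - i) by omega, pow_add, root_pow_eq_one, one_mul,
        basis_equivFun_root_pow_zero (by omega)]
      simp only [Fin.ext_iff]
      congr 1
      exact propext (by omega)
    · rw [basis_equivFun_root_pow_zero (by omega), if_neg (by omega),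
        if_neg (by rw [Fin.ext_iff]; omega)]
  exact LinearMap.congr_fun h z

lemma dotProduct_basis_equivFun (z w : CyclicRing R n) :
    (basis R n).equivFun z ⬝ᵥ (basis R n).equivFun w =
      (basis R n).equivFun (reciprocal R n z * w) 0 := by
  conv_rhs => rw [← (basis R n).sum_equivFun z]
  simp only [map_sum, map_smul, Finset.sum_mul, smul_mul_assoc, Finset.sum_apply, Pi.smul_apply,
    smul_eq_mul, basis_apply, basis_equivFun_reciprocal_root_pow_mul, dotProduct]

lemma eq_zero_of_forall_basis_equivFun_mul_zero {z : CyclicRing R n}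
    (h : ∀ a, (basis R n).equivFun (a * z) 0 = 0) : z = 0 :=
  (basis R n).equivFun.injective <| funext fun i => by
    rw [← basis_equivFun_reciprocal_root_pow_mul, h, map_zero, Pi.zero_apply]

end CyclicRing

open CyclicRing AdjoinRoot

lemma sinner_eq_dotProduct_add {n : ℕ} (u w : (Fin n → ZMod 2) × (Fin n → ZMod 2)) :
    sinner n u w = u.1 ⬝ᵥ w.2 + u.2 ⬝ᵥ w.1 := by
  simp only [sinner, dotProduct, CharTwo.sub_eq_add, Finset.sum_add_distrib]

lemma barPoly_coeff (n : ℕ) (f : (ZMod 2)[X]) (j : ℕ) :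
    (barPoly n f).coeff j = if j < n then f.coeff (if j = 0 then 0 else n - j) else 0 := by
  simp [barPoly]

lemma barPoly_eq_reflect_add {n : ℕ} {f : (ZMod 2)[X]} (hf : f.natDegree < n) :
    barPoly n f = reflect n f + C (f.coeff 0) * (1 - X ^ n) := by
  ext j
  rw [barPoly_coeff, coeff_add, coeff_reflect, coeff_C_mul, coeff_sub, coeff_one, coeff_X_pow]
  rcases lt_trichotomy j n with hj | rfl | hj
  · rw [revAt_le hj.le, if_pos hj]
    rcases eq_or_ne j 0 with rfl | hj0
    · simp [coeff_eq_zero_of_natDegree_lt hf, hj.ne]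
    · simp [hj0, hj.ne]
  · have : j ≠ 0 := by omega
    simp [this, CharTwo.add_self_eq_zero]
  · rw [revAt_eq_self_of_lt hj, coeff_eq_zero_of_natDegree_lt (hf.trans hj)]
    simp [hj.ne', (hf.trans_le' (Nat.zero_le _)).trans hj |>.ne', not_lt.mpr hj.le]

section QuasiCyclic

variable {n : ℕ} [NeZero n]

local notation "σ" => reciprocal (ZMod 2) n

lemma vecL_modByMonic (f : (ZMod 2)[X]) :
    vecL n (f %ₘ (X ^ n - 1)) = (basis (ZMod 2) n).equivFun (mk _ f) :=
  funext fun i => (basis_repr_mk f i).symm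

lemma cwL_apply (g₁ g₂ v a b : (ZMod 2)[X]) :
    cwL n g₁ g₂ v (a, b) =
      ((basis _ n).equivFun (mk _ a * (mk _ v * mk _ g₁) + mk _ b * mk _ g₂),
        (basis _ n).equivFun (mk _ a * mk _ g₁ + mk _ b * (mk _ v * mk _ g₂))) := by
  simp [cwL, vecL_modByMonic, mul_assoc]

lemma dualCwL_apply (G₁ G₂ V c d : (ZMod 2)[X]) :
    dualCwL n G₁ G₂ V (c, d) =
      ((basis _ n).equivFun (mk _ c * mk _ G₁ + mk _ d * (mk _ V * mk _ G₂)),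
        (basis _ n).equivFun (mk _ c * (mk _ V * mk _ G₁) + mk _ d * mk _ G₂)) := by
  simp [dualCwL, vecL_modByMonic, mul_assoc]

lemma mem_sympDual_QCCode_iff (g₁ g₂ v : (ZMod 2)[X]) (W₁ W₂ : CyclicRing (ZMod 2) n) :
    ((basis _ n).equivFun W₁, (basis _ n).equivFun W₂) ∈ sympDual n (QCCode n g₁ g₂ v) ↔
      σ (mk _ g₁) * (W₁ + σ (mk _ v) * W₂) = 0 ∧ σ (mk _ g₂) * (σ (mk _ v) * W₁ + W₂) = 0 := by
  have hsinner : ∀ a b, sinner n (cwL n g₁ g₂ v (a, b))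
      ((basis _ n).equivFun W₁, (basis _ n).equivFun W₂) =
      (basis _ n).equivFun (σ (mk _ a) * (σ (mk _ g₁) * (W₁ + σ (mk _ v) * W₂)) +
        σ (mk _ b) * (σ (mk _ g₂) * (σ (mk _ v) * W₁ + W₂))) 0 := by
    intro a b
    have hexpand : σ (mk _ a * (mk _ v * mk _ g₁) + mk _ b * mk _ g₂) * W₂ +
        σ (mk _ a * mk _ g₁ + mk _ b * (mk _ v * mk _ g₂)) * W₁ =
        σ (mk _ a) * (σ (mk _ g₁) * (W₁ + σ (mk _ v) * W₂)) +
          σ (mk _ b) * (σ (mk _ g₂) * (σ (mk _ v) * W₁ + W₂)) := by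
      simp only [map_add, map_mul]
      ring
    rw [sinner_eq_dotProduct_add, cwL_apply, dotProduct_basis_equivFun,
      dotProduct_basis_equivFun, ← hexpand, LinearEquiv.map_add, Pi.add_apply]
  change (∀ u ∈ LinearMap.range (cwL n g₁ g₂ v), _) ↔ _
  simp only [LinearMap.mem_range, forall_exists_index, forall_apply_eq_imp_iff]
  simp only [Prod.forall, hsinner]
  have hsurj : Function.Surjective fun a => σ (mk _ a) :=
    (reciprocal _ n).surjective.comp mk_surjective
  constructor
  · intro h
    refine ⟨eq_zero_of_forall_basis_equivFun_mul_zero fun A => ?_,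
      eq_zero_of_forall_basis_equivFun_mul_zero fun A => ?_⟩
    · obtain ⟨a, rfl⟩ := hsurj A
      simpa using h a 0
    · obtain ⟨b, rfl⟩ := hsurj A
      simpa using h 0 b
  · rintro ⟨h₁, h₂⟩ a b
    simp [h₁, h₂]

lemma mem_range_dualCwL_iff (G₁ G₂ V : (ZMod 2)[X]) (W₁ W₂ : CyclicRing (ZMod 2) n) :
    ((basis _ n).equivFun W₁, (basis _ n).equivFun W₂) ∈ LinearMap.range (dualCwL n G₁ G₂ V) ↔
      ∃ c d, W₁ = c * mk _ G₁ + d * (mk _ V * mk _ G₂) ∧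
        W₂ = c * (mk _ V * mk _ G₁) + d * mk _ G₂ := by
  simp only [LinearMap.mem_range, Prod.exists, dualCwL_apply, Prod.mk.injEq,
    (basis _ n).equivFun.injective.eq_iff, mk_surjective.exists, eq_comm]

lemma mk_barPoly {f : (ZMod 2)[X]} (hf : f.natDegree < n) : mk _ (barPoly n f) = σ (mk _ f) := by
  rw [barPoly_eq_reflect_add hf, map_add, mk_reflect hf.le, root_pow_eq_one, one_mul, map_mul,
    map_sub, map_one, map_pow, mk_X, root_pow_eq_one, sub_self, mul_zero, add_zero]

end QuasiCyclic

theorem stmt_5_general (n : ℕ) (hn : 0 < n) (g₁ g₂ v h₁ h₂ : Polynomial (ZMod 2))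
    (hdegv : v.natDegree < n)
    (he₁ : g₁ * h₁ = X ^ n - 1) (he₂ : g₂ * h₂ = X ^ n - 1)
    (hvcop : IsCoprime (v - 1) (X ^ n - 1)) :
    sympDual n (QCCode n g₁ g₂ v) =
      LinearMap.range (dualCwL n h₁.reverse h₂.reverse (barPoly n v)) := by
  have : NeZero n := ⟨hn.ne'⟩
  ext ⟨w₁, w₂⟩
  obtain ⟨W₁, rfl⟩ := (basis (ZMod 2) n).equivFun.surjective w₁
  obtain ⟨W₂, rfl⟩ := (basis (ZMod 2) n).equivFun.surjective w₂
  rw [mem_sympDual_QCCode_iff, mem_range_dualCwL_iff, mk_barPoly hdegv]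
  refine CharTwo.mul_add_mul_eq_zero_iff_exists ?_ (fun _ => reciprocal_mk_mul_eq_zero_iff he₁)
    (fun _ => reciprocal_mk_mul_eq_zero_iff he₂)
  simpa using (isUnit_mk_of_isCoprime hvcop).map (reciprocal (ZMod 2) n)

/-- the symplectic dual of `C(g₁,g₂,v)` equals
`{ ([c·g₁^⊥ + d·v̄·g₂^⊥ mod xⁿ−1], [c·v̄·g₁^⊥ + d·g₂^⊥ mod xⁿ−1]) : c, d ∈ F₂[x] }`,
where `g₁^⊥ = h₁.reverse` and `g₂^⊥ = h₂.reverse`. -/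
theorem stmt_5 (n : ℕ) (hn : 0 < n) (g₁ g₂ v h₁ h₂ : Polynomial (ZMod 2))
    (hdeg₁ : g₁.natDegree < n) (hdeg₂ : g₂.natDegree < n) (hdegv : v.natDegree < n)
    (he₁ : g₁ * h₁ = X ^ n - 1) (he₂ : g₂ * h₂ = X ^ n - 1)
    (hcop : IsCoprime g₁ g₂) (hvcop : IsCoprime (v - 1) (X ^ n - 1)) :
    sympDual n (QCCode n g₁ g₂ v) =
      LinearMap.range (dualCwL n h₁.reverse h₂.reverse (barPoly n v)) :=
  stmt_5_general n hn g₁ g₂ v h₁ h₂ hdegv he₁ he₂ hvcop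
end

section
/- Let n be an odd positive integer, let ζ be a primitive n-th root of unity in an algebraic closure of F₂, let g₁, g₂ ∈ F₂[x] be monic divisors of xⁿ−1 with g₁·h₁ = xⁿ−1 for some h₁ ∈ F₂[x], and set g₁^⊥ = x^{deg h₁}·h₁(1/x). Define the defining sets T₁ = {i ∈ Z/nZ : g₁(ζⁱ) = 0} and T₂ = {i ∈ Z/nZ : g₂(ζⁱ) = 0}. If T₁ ∩ (−T₂) = ∅ and T₁ ∩ T₂ = ∅, then g₂ divides g₁^⊥ in F₂[x] and gcd(g₁, g₂) = 1. -/
open Polynomial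

/-!
Every root of a divisor of `xⁿ − 1` is a power `ζⁱ`, and the roots of `p.reverse` are the
inverses of the roots of `p`. So `T₁ ∩ T₂ = ∅` says that `g₁` and `g₂` have no common root, and
`T₁ ∩ (−T₂) = ∅` that `g₂` and `g₁.reverse` have none; both pairs are therefore coprime.
Reversing `g₁ h₁ = xⁿ − 1` gives `g₁.reverse * h₁.reverse = 1 − xⁿ`, which `g₂` divides, hence
`g₂ ∣ h₁.reverse`.
-/

namespace Polynomial

theorem reverse_X_pow_sub_one {R : Type*} [CommRing R] [Nontrivial R] (n : ℕ) :
    (X ^ n - 1 : R[X]).reverse = 1 - X ^ n := by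
  have : (X ^ n : R[X]).reverse = 1 := by
    rw [← mul_one (X ^ n), reverse_X_pow_mul, ← C_1, reverse_C]
  rw [sub_eq_add_neg, ← C_1, ← C_neg, reverse_add_C, this, natDegree_X_pow, C_neg, C_1,
    neg_one_mul, ← sub_eq_add_neg]

theorem aeval_inv_reverse_eq_zero_iff {K L : Type*} [Field K] [Field L] [Algebra K L]
    {x : L} (hx : x ≠ 0) (f : K[X]) : aeval x⁻¹ f.reverse = 0 ↔ aeval x f = 0 := by
  let := invertibleOfNonzero hx
  simpa only [aeval_def, invOf_eq_inv] using eval₂_reverse_eq_zero_iff (algebraMap K L) x f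

theorem dvd_reverse_of_mul_eq_X_pow_sub_one {K : Type*} [Field K] {n : ℕ} {f g h : K[X]}
    (hgh : g * h = X ^ n - 1) (hf : f ∣ X ^ n - 1) (hcop : IsCoprime f g.reverse) :
    f ∣ h.reverse := by
  have : f ∣ g.reverse * h.reverse := by
    rwa [← reverse_mul_of_domain, hgh, reverse_X_pow_sub_one, dvd_sub_comm]
  exact hcop.dvd_of_dvd_mul_left this

end Polynomial

namespace IsPrimitiveRoot

variable {L : Type*} [Field L] {n : ℕ} [NeZero n] {ζ : L}

theorem pow_val_neg (hζ : IsPrimitiveRoot ζ n) (i : ZMod n) :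
    ζ ^ (-i).val = (ζ ^ i.val)⁻¹ := by
  refine eq_inv_of_mul_eq_one_left ?_
  rw [← pow_add, hζ.pow_eq_one_iff_dvd, ← ZMod.natCast_eq_zero_iff]
  push_cast [ZMod.natCast_val, ZMod.cast_id]
  exact neg_add_cancel i

theorem exists_eq_pow_val_of_aeval_eq_zero {K : Type*} [Field K] [Algebra K L]
    (hζ : IsPrimitiveRoot ζ n) {p : K[X]} (hp : p ∣ X ^ n - 1) {α : L} (hα : aeval α p = 0) :
    ∃ i : ZMod n, α = ζ ^ i.val := by
  obtain ⟨q, hpq⟩ := hp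
  have hαn : α ^ n = 1 := by
    simpa [sub_eq_zero, hα] using congrArg (aeval α) hpq
  obtain ⟨k, hk, rfl⟩ := hζ.eq_pow_of_pow_eq_one hαn
  exact ⟨k, by rw [ZMod.val_natCast_of_lt hk]⟩

theorem isCoprime_of_forall_aeval_pow_val {K : Type*} [Field K] [Algebra K L] [IsAlgClosed L]
    (hζ : IsPrimitiveRoot ζ n) {g f : K[X]} (hg : g ∣ X ^ n - 1)
    (h : ∀ i : ZMod n, aeval (ζ ^ i.val) g = 0 → aeval (ζ ^ i.val) f ≠ 0) :
    IsCoprime g f := by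
  refine (isCoprime_iff_aeval_ne_zero_of_isAlgClosed K L g f).2 fun α =>
    or_iff_not_imp_left.2 fun hα => ?_
  rw [not_not] at hα
  obtain ⟨i, rfl⟩ := hζ.exists_eq_pow_val_of_aeval_eq_zero hg hα
  exact h i hα

end IsPrimitiveRoot

theorem stmt_9_general (n : ℕ) (hn : 0 < n)
    (ζ : AlgebraicClosure (ZMod 2)) (hζ : IsPrimitiveRoot ζ n)
    (g₁ g₂ h₁ : Polynomial (ZMod 2))
    (hdvd₂ : g₂ ∣ X ^ n - 1) (he₁ : g₁ * h₁ = X ^ n - 1)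
    (hT₁ : {i : ZMod n | Polynomial.aeval (ζ ^ i.val) g₁ = 0} ∩
        ((fun i => -i) '' {i : ZMod n | Polynomial.aeval (ζ ^ i.val) g₂ = 0}) = ∅)
    (hT₂ : {i : ZMod n | Polynomial.aeval (ζ ^ i.val) g₁ = 0} ∩
        {i : ZMod n | Polynomial.aeval (ζ ^ i.val) g₂ = 0} = ∅) :
    g₂ ∣ h₁.reverse ∧ IsCoprime g₁ g₂ := by
  have : NeZero n := ⟨hn.ne'⟩
  have hcop₂ : IsCoprime g₂ g₁.reverse := by
    refine hζ.isCoprime_of_forall_aeval_pow_val hdvd₂ fun i hg₂ hrev => ?_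
    have h₁neg : aeval (ζ ^ (-i).val) g₁ = 0 := by
      rwa [← aeval_inv_reverse_eq_zero_iff (pow_ne_zero _ (hζ.ne_zero hn.ne')),
        hζ.pow_val_neg, inv_inv]
    exact Set.eq_empty_iff_forall_notMem.mp hT₁ (-i) ⟨h₁neg, i, hg₂, rfl⟩
  refine ⟨dvd_reverse_of_mul_eq_X_pow_sub_one he₁ hdvd₂ hcop₂, ?_⟩
  exact hζ.isCoprime_of_forall_aeval_pow_val ⟨h₁, he₁.symm⟩
    fun i hg₁ hg₂ => Set.eq_empty_iff_forall_notMem.mp hT₂ i ⟨hg₁, hg₂⟩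

/-- if the defining sets satisfy `T₁ ∩ (−T₂) = ∅` and `T₁ ∩ T₂ = ∅`,
then `g₂ ∣ g₁^⊥` (with `g₁^⊥ = h₁.reverse`) and `gcd(g₁, g₂) = 1`. -/
theorem stmt_9 (n : ℕ) (hn : 0 < n) (hodd : Odd n)
    (ζ : AlgebraicClosure (ZMod 2)) (hζ : IsPrimitiveRoot ζ n)
    (g₁ g₂ h₁ : Polynomial (ZMod 2)) (hm₁ : g₁.Monic) (hm₂ : g₂.Monic)
    (hdvd₂ : g₂ ∣ X ^ n - 1) (he₁ : g₁ * h₁ = X ^ n - 1)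
    (hT₁ : {i : ZMod n | Polynomial.aeval (ζ ^ i.val) g₁ = 0} ∩
        ((fun i => -i) '' {i : ZMod n | Polynomial.aeval (ζ ^ i.val) g₂ = 0}) = ∅)
    (hT₂ : {i : ZMod n | Polynomial.aeval (ζ ^ i.val) g₁ = 0} ∩
        {i : ZMod n | Polynomial.aeval (ζ ^ i.val) g₂ = 0} = ∅) :
    g₂ ∣ h₁.reverse ∧ IsCoprime g₁ g₂ :=
  stmt_9_general n hn ζ hζ g₁ g₂ h₁ hdvd₂ he₁ hT₁ hT₂
end
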